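/- Objective decrease of the combined snap-then-ascent step for the semidiscrete barycenter functional: let μ₁,…,μ_N be probability measures on a compact X ⊂ ℝ^D, Σ = {x¹,…,x^m}, and suppose for each j the potential φ_j is optimal so that F_OT[φ_j, Σ; μ_j] = W₂²((1/m)∑ᵢδ_{xⁱ}, μ_j) and the optimal transport sends the power cells V^i_j to the points xⁱ with masses a^i_j = μ_j(V^i_j) = 1/m. If x̃ⁱ = (∑ⱼ a^i_j b^i_j)/(∑ⱼ a^i_j) with b^i_j the barycenter of V^i_j under μ_j, then F[Σ̃] ≤ F[Σ], where F[Σ] = (1/N)∑ⱼ W₂²((1/m)∑ᵢδ_{xⁱ}, μ_j). -/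

import Mathlib

open MeasureTheory

/-- Squared 2-Wasserstein distance. -/
noncomputable def W2sq {X : Type*} [MeasurableSpace X] [PseudoMetricSpace X]
    (μ ν : Measure X) : ℝ :=
  sInf { c : ℝ | ∃ γ : Measure (X × X),
    γ.map Prod.fst = μ ∧ γ.map Prod.snd = ν ∧ c = ∫ p, dist p.1 p.2 ^ 2 ∂γ }

private lemma map_finsum_measure {α β : Type*} [MeasurableSpace α] [MeasurableSpace β]
    {ι : Type*} (s : Finset ι) (ν : ι → Measure α) {f : α → β} (hf : Measurable f) :
    (∑ i ∈ s, ν i).map f = ∑ i ∈ s, (ν i).map f := by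
  classical
  induction s using Finset.induction with
  | empty => simp
  | insert _ _ h ih =>
      rw [Finset.sum_insert h, Finset.sum_insert h, Measure.map_add _ _ hf, ih]

private lemma integrable_aux {D : ℕ} {F : Type*} [NormedAddCommGroup F]
    {K : Set (EuclideanSpace ℝ (Fin D))} (hK : IsCompact K)
    (ν : Measure (EuclideanSpace ℝ (Fin D))) [IsFiniteMeasure ν]
    (hsupp : ν Kᶜ = 0) {f : EuclideanSpace ℝ (Fin D) → F} (hf : Continuous f) :
    Integrable f ν := by
  obtain ⟨C, hC⟩ := hK.exists_bound_of_continuousOn hf.continuousOn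
  refine (integrable_const C).mono' hf.aestronglyMeasurable ?_
  have hae : ∀ᵐ y ∂ν, y ∈ K := by
    rw [ae_iff]
    exact hsupp
  exact hae.mono fun y hy => hC y hy

private lemma mean_min {D : ℕ} {K : Set (EuclideanSpace ℝ (Fin D))} (hK : IsCompact K)
    {ν : Measure (EuclideanSpace ℝ (Fin D))} [IsFiniteMeasure ν]
    (hsupp : ν Kᶜ = 0) (b p : EuclideanSpace ℝ (Fin D))
    (hb : (ν Set.univ).toReal • b = ∫ y, y ∂ν) :
    ∫ y, ‖y - b‖ ^ 2 ∂ν ≤ ∫ y, ‖y - p‖ ^ 2 ∂ν := by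
  have hid : Integrable (fun y : EuclideanSpace ℝ (Fin D) => y) ν :=
    integrable_aux hK ν hsupp continuous_id
  have hsub : Integrable (fun y : EuclideanSpace ℝ (Fin D) => y - b) ν :=
    hid.sub (integrable_const b)
  have hzero : ∫ y, (y - b) ∂ν = 0 := by
    rw [integral_sub hid (integrable_const b), integral_const, ← hb]
    exact sub_self _
  have hnb : Integrable (fun y : EuclideanSpace ℝ (Fin D) => ‖y - b‖ ^ 2) ν :=
    integrable_aux hK ν hsupp (by fun_prop)
  have hcont : Continuous fun y : EuclideanSpace ℝ (Fin D) =>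
      2 * (inner ℝ (y - b) (b - p) : ℝ) + ‖b - p‖ ^ 2 := by
    refine Continuous.add (Continuous.mul continuous_const ?_) continuous_const
    exact Continuous.inner (continuous_id.sub continuous_const) continuous_const
  have hcross : Integrable
      (fun y : EuclideanSpace ℝ (Fin D) => 2 * (inner ℝ (y - b) (b - p) : ℝ) + ‖b - p‖ ^ 2) ν :=
    integrable_aux hK ν hsupp hcont
  have hexp : (fun y : EuclideanSpace ℝ (Fin D) => ‖y - p‖ ^ 2)
      = fun y => ‖y - b‖ ^ 2 + (2 * (inner ℝ (y - b) (b - p) : ℝ) + ‖b - p‖ ^ 2) := by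
    funext y
    have h : y - p = (y - b) + (b - p) := by abel
    rw [h, norm_add_sq_real]
    ring
  rw [hexp, integral_add hnb hcross]
  have hcrossval : ∫ y, (2 * (inner ℝ (y - b) (b - p) : ℝ) + ‖b - p‖ ^ 2) ∂ν
      = (ν Set.univ).toReal * ‖b - p‖ ^ 2 := by
    have hinner : Integrable (fun y : EuclideanSpace ℝ (Fin D) => 2 * (inner ℝ (y - b) (b - p) : ℝ)) ν := by
      refine integrable_aux hK ν hsupp ?_
      exact Continuous.mul continuous_const
        (Continuous.inner (continuous_id.sub continuous_const) continuous_const)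
    rw [integral_add hinner (integrable_const _), integral_const, smul_eq_mul, measureReal_def]
    have h1 : ∀ y : EuclideanSpace ℝ (Fin D), (inner ℝ (y - b) (b - p) : ℝ) = (inner ℝ (b - p) (y - b) : ℝ) :=
      fun y => real_inner_comm _ _
    have : ∫ y, 2 * (inner ℝ (y - b) (b - p) : ℝ) ∂ν = 2 * ∫ y, (inner ℝ (b - p) (y - b) : ℝ) ∂ν := by
      simp_rw [h1]
      exact integral_const_mul 2 _
    rw [this, integral_inner hsub (b - p), hzero, inner_zero_right]
    ring
  rw [hcrossval]
  have h1 : (0:ℝ) ≤ (ν Set.univ).toReal * ‖b - p‖ ^ 2 := by positivity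
  linarith

/-- Objective decrease of the snap-then-ascent step: if each potential `φⱼ`
is optimal (strong duality holds) and each power cell has mass `1/m`, then
moving each point to the average of its cell barycenters does not increase
the semidiscrete barycenter objective `F[Σ] = (1/N) ∑ⱼ W₂²((1/m)∑ᵢ δ_{xⁱ}, μⱼ)`. -/
theorem snap_ascent_decreases_objective {D m N : ℕ} (hm : 0 < m) (hN : 0 < N)
    (K : Set (EuclideanSpace ℝ (Fin D))) (hK : IsCompact K)
    (μ : Fin N → Measure (EuclideanSpace ℝ (Fin D)))
    [∀ j, IsProbabilityMeasure (μ j)]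
    (hsupp : ∀ j, (μ j) Kᶜ = 0)
    (x : Fin m → EuclideanSpace ℝ (Fin D))
    (φ : Fin N → Fin m → ℝ)
    (V : Fin N → Fin m → Set (EuclideanSpace ℝ (Fin D)))
    (hV : ∀ j i, V j i = {y : EuclideanSpace ℝ (Fin D) |
      ∀ i', ‖y - x i‖ ^ 2 - φ j i ≤ ‖y - x i'‖ ^ 2 - φ j i'})
    (hopt : ∀ j, (∑ i, φ j i / m) + ∫ y, (⨅ i, (‖y - x i‖ ^ 2 - φ j i)) ∂(μ j)
        = W2sq (((m : ENNReal))⁻¹ • ∑ i, Measure.dirac (x i)) (μ j))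
    (hmass : ∀ j i, (μ j) (V j i) = ((m : ENNReal))⁻¹) :
    (N : ℝ)⁻¹ * ∑ j, W2sq (((m : ENNReal))⁻¹ • ∑ i, Measure.dirac
        ((N : ℝ)⁻¹ • ∑ j' : Fin N, (m : ℝ) • ∫ y in V j' i, y ∂(μ j'))) (μ j)
      ≤ (N : ℝ)⁻¹ * ∑ j, W2sq (((m : ENNReal))⁻¹ • ∑ i, Measure.dirac (x i)) (μ j) := by
  classical
  haveI : Nonempty (Fin m) := ⟨⟨0, hm⟩⟩
  have hm0 : (m : ℝ) ≠ 0 := Nat.cast_ne_zero.2 hm.ne'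
  have hN0 : (N : ℝ) ≠ 0 := Nat.cast_ne_zero.2 hN.ne'
  have hmE0 : (m : ENNReal) ≠ 0 := Nat.cast_ne_zero.2 hm.ne'
  have hmET : (m : ENNReal) ≠ ⊤ := ENNReal.natCast_ne_top m
  -- measurability of cells
  have hVmeas : ∀ j i, MeasurableSet (V j i) := by
    intro j i
    rw [hV]
    have hrw : {y : EuclideanSpace ℝ (Fin D) |
        ∀ i', ‖y - x i‖ ^ 2 - φ j i ≤ ‖y - x i'‖ ^ 2 - φ j i'}
        = ⋂ i', {y | ‖y - x i‖ ^ 2 - φ j i ≤ ‖y - x i'‖ ^ 2 - φ j i'} := by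
      ext y; simp [Set.mem_iInter]
    rw [hrw]
    refine MeasurableSet.iInter fun i' => ?_
    exact (isClosed_le (by fun_prop) (by fun_prop)).measurableSet
  -- disjointified cells
  set W : Fin N → Fin m → Set (EuclideanSpace ℝ (Fin D)) :=
    fun j i => V j i \ ⋃ (i' : Fin m) (_ : i' < i), V j i' with hWdef
  have hWmeas : ∀ j i, MeasurableSet (W j i) := fun j i =>
    (hVmeas j i).diff (MeasurableSet.iUnion fun i' =>
      MeasurableSet.iUnion fun _ => hVmeas j i')
  have hWsub : ∀ j i, W j i ⊆ V j i := fun j i => Set.diff_subset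
  have hWdisj : ∀ j, Pairwise (Function.onFun Disjoint (W j)) := by
    intro j i i' hne
    rcases hne.lt_or_gt with h | h
    · exact Set.disjoint_left.2 fun y hy hy' =>
        hy'.2 (Set.mem_iUnion.2 ⟨i, Set.mem_iUnion.2 ⟨h, hy.1⟩⟩)
    · exact Set.disjoint_left.2 fun y hy hy' =>
        hy.2 (Set.mem_iUnion.2 ⟨i', Set.mem_iUnion.2 ⟨h, hy'.1⟩⟩)
  have hWuniv : ∀ j, (⋃ i, W j i) = Set.univ := by
    intro j
    refine Set.eq_univ_of_forall fun y => ?_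
    have hne : (Finset.univ.filter (fun i => y ∈ V j i)).Nonempty := by
      obtain ⟨i0, _, hi0⟩ := Finset.exists_min_image Finset.univ
        (fun i => ‖y - x i‖ ^ 2 - φ j i) ⟨⟨0, hm⟩, Finset.mem_univ _⟩
      exact ⟨i0, Finset.mem_filter.2 ⟨Finset.mem_univ _, by
        rw [hV]; exact fun i' => hi0 i' (Finset.mem_univ _)⟩⟩
    obtain ⟨i0, hi0s, hminl⟩ := Finset.exists_min_image _ id hne
    refine Set.mem_iUnion.2 ⟨i0, (Finset.mem_filter.1 hi0s).2, fun hy => ?_⟩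
    rw [Set.mem_iUnion] at hy
    obtain ⟨i', hi'⟩ := hy
    rw [Set.mem_iUnion] at hi'
    obtain ⟨hlt, hmem⟩ := hi'
    exact absurd (hminl i' (Finset.mem_filter.2 ⟨Finset.mem_univ _, hmem⟩)) (not_le.2 hlt)
  have hbiUnion : ∀ j, (⋃ i ∈ Finset.univ, W j i) = Set.univ := by
    intro j
    rw [← hWuniv j]
    simp
  -- mass of disjointified cells
  have hWmass : ∀ j i, μ j (W j i) = (m : ENNReal)⁻¹ := by
    intro j i
    have hle : ∀ i', μ j (W j i') ≤ (m : ENNReal)⁻¹ := fun i' =>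
      (measure_mono (hWsub j i')).trans_eq (hmass j i')
    have hsum : ∑ i', μ j (W j i') = 1 := by
      rw [← measure_biUnion_finset ?_ (fun i' _ => hWmeas j i')]
      · rw [hbiUnion j]; exact measure_univ
      · intro a _ b _ hab
        exact hWdisj j hab
    have hsum2 : (∑ _i' : Fin m, (m : ENNReal)⁻¹) = 1 := by
      rw [Finset.sum_const, Finset.card_univ, Fintype.card_fin, nsmul_eq_mul,
        ENNReal.mul_inv_cancel hmE0 hmET]
    have hkey : (∑ i', ((m : ENNReal)⁻¹ - μ j (W j i'))) = 0 := by
      have hexpand : (∑ _i' : Fin m, (m : ENNReal)⁻¹)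
          = (∑ i', μ j (W j i')) + ∑ i', ((m : ENNReal)⁻¹ - μ j (W j i')) := by
        rw [← Finset.sum_add_distrib]
        exact Finset.sum_congr rfl fun i' _ => (add_tsub_cancel_of_le (hle i')).symm
      rw [hsum, hsum2] at hexpand
      have h1 : (1 : ENNReal) + 0 = 1 + ∑ i', ((m : ENNReal)⁻¹ - μ j (W j i')) := by
        rw [add_zero]; exact hexpand
      exact ((ENNReal.add_right_inj ENNReal.one_ne_top).1 h1).symm
    have := Finset.sum_eq_zero_iff.1 hkey i (Finset.mem_univ i)
    exact le_antisymm (hle i) (tsub_eq_zero_iff_le.1 this)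
  -- a.e. equality of V and W
  have hWaeV : ∀ j i, W j i =ᵐ[μ j] V j i := by
    intro j i
    rw [ae_eq_set]
    constructor
    · rw [Set.diff_eq_empty.2 (hWsub j i)]
      exact measure_empty
    · rw [measure_diff (hWsub j i) (hWmeas j i).nullMeasurableSet
        (by rw [hWmass j i]; exact ENNReal.inv_ne_top.2 hmE0), hmass j i, hWmass j i,
        tsub_self]
  -- decomposition of μ j
  have hrestr : ∀ j, μ j = ∑ i, (μ j).restrict (W j i) := by
    intro j
    ext s hs
    rw [Measure.coe_finset_sum, Finset.sum_apply]
    simp only [Measure.restrict_apply hs]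
    rw [← measure_biUnion_finset ?_ (fun i _ => hs.inter (hWmeas j i))]
    · rw [show (⋃ i ∈ Finset.univ, s ∩ W j i) = ⋃ i, s ∩ W j i by simp,
        ← Set.inter_iUnion, hWuniv j, Set.inter_univ]
    · intro a _ b _ hab
      exact (hWdisj j hab).mono Set.inter_subset_right Set.inter_subset_right
  have hKc : MeasurableSet Kᶜ := hK.isClosed.measurableSet.compl
  have hsuppR : ∀ j i, ((μ j).restrict (W j i)) Kᶜ = 0 := by
    intro j i
    rw [Measure.restrict_apply hKc]
    exact measure_mono_null Set.inter_subset_left (hsupp j)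
  -- the snapped points
  set xt : Fin m → EuclideanSpace ℝ (Fin D) := fun i =>
    (N : ℝ)⁻¹ • ∑ j' : Fin N, (m : ℝ) • ∫ y in V j' i, y ∂(μ j') with hxt
  -- dual value equals cell transport cost
  have hlow : ∀ j, W2sq (((m : ENNReal))⁻¹ • ∑ i, Measure.dirac (x i)) (μ j)
      = ∑ i, ∫ y in W j i, ‖y - x i‖ ^ 2 ∂(μ j) := by
    intro j
    rw [← hopt j]
    have hg_eq : ∀ i, ∀ y ∈ V j i,
        (⨅ i', (‖y - x i'‖ ^ 2 - φ j i')) = ‖y - x i‖ ^ 2 - φ j i := by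
      intro i y hy
      rw [hV] at hy
      exact le_antisymm (ciInf_le (Set.Finite.bddBelow (Set.finite_range _)) i) (le_ciInf hy)
    have hsplit : ∫ y, (⨅ i, (‖y - x i‖ ^ 2 - φ j i)) ∂(μ j)
        = ∑ i, ∫ y in W j i, (‖y - x i‖ ^ 2 - φ j i) ∂(μ j) := by
      conv_lhs => rw [hrestr j]
      rw [integral_finset_sum_measure ?_]
      · exact Finset.sum_congr rfl fun i _ =>
          setIntegral_congr_fun (hWmeas j i) fun y hy => hg_eq i y (hWsub j i hy)
      · intro i _
        refine Integrable.congr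
          (f := fun y => ‖y - x i‖ ^ 2 - φ j i) ?_ ?_
        · exact (integrable_aux hK (μ j) (hsupp j) (by fun_prop)).restrict
        · exact (ae_restrict_iff' (hWmeas j i)).2
            (ae_of_all _ fun y hy => (hg_eq i y (hWsub j i hy)).symm)
    rw [hsplit]
    have hconst : ∀ i, ∫ y in W j i, (‖y - x i‖ ^ 2 - φ j i) ∂(μ j)
        = ∫ y in W j i, ‖y - x i‖ ^ 2 ∂(μ j) - φ j i / m := by
      intro i
      rw [integral_sub ((integrable_aux hK (μ j) (hsupp j) (by fun_prop)).restrict)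
        (integrable_const _), setIntegral_const, measureReal_def, hWmass j i]
      congr 1
      rw [smul_eq_mul, ENNReal.toReal_inv]
      simp [div_eq_inv_mul]
    simp_rw [hconst]
    rw [Finset.sum_sub_distrib]
    ring
  -- upper bound for snapped configuration via explicit coupling
  have hup : ∀ j, W2sq (((m : ENNReal))⁻¹ • ∑ i, Measure.dirac (xt i)) (μ j)
      ≤ ∑ i, ∫ y in W j i, ‖y - xt i‖ ^ 2 ∂(μ j) := by
    intro j
    set γ : Measure (EuclideanSpace ℝ (Fin D) × EuclideanSpace ℝ (Fin D)) :=
      ∑ i, ((μ j).restrict (W j i)).map (fun y => (xt i, y)) with hγ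
    have hemb : ∀ i, Measurable (fun y : EuclideanSpace ℝ (Fin D) => (xt i, y)) :=
      fun i => measurable_const.prodMk measurable_id
    refine csInf_le ⟨0, ?_⟩ ?_
    · rintro c ⟨γ', _, _, rfl⟩
      exact integral_nonneg fun p => sq_nonneg _
    refine ⟨γ, ?_, ?_, ?_⟩
    · rw [hγ, map_finsum_measure _ _ measurable_fst]
      have h1 : ∀ i, (((μ j).restrict (W j i)).map (fun y => (xt i, y))).map Prod.fst
          = (m : ENNReal)⁻¹ • Measure.dirac (xt i) := by
        intro i
        rw [Measure.map_map measurable_fst (hemb i)]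
        have hc : (Prod.fst ∘ fun y : EuclideanSpace ℝ (Fin D) => (xt i, y))
            = fun _ => xt i := rfl
        rw [hc, Measure.map_const, Measure.restrict_apply_univ, hWmass j i]
      simp_rw [h1]
      rw [Finset.smul_sum]
    · rw [hγ, map_finsum_measure _ _ measurable_snd]
      have h1 : ∀ i, (((μ j).restrict (W j i)).map (fun y => (xt i, y))).map Prod.snd
          = (μ j).restrict (W j i) := by
        intro i
        rw [Measure.map_map measurable_snd (hemb i)]
        have hc : (Prod.snd ∘ fun y : EuclideanSpace ℝ (Fin D) => (xt i, y)) = id := rfl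
        rw [hc, Measure.map_id]
      simp_rw [h1]
      exact (hrestr j).symm
    · have hintc : ∀ i, Integrable
          (fun p : EuclideanSpace ℝ (Fin D) × EuclideanSpace ℝ (Fin D) => dist p.1 p.2 ^ 2)
          ((((μ j).restrict (W j i)).map (fun y => (xt i, y)))) := by
        intro i
        refine (integrable_map_measure ?_ (hemb i).aemeasurable).2 ?_
        · exact (Continuous.aestronglyMeasurable (by fun_prop))
        · exact (integrable_aux hK (μ j) (hsupp j) (by fun_prop)).restrict
      rw [hγ, integral_finset_sum_measure (fun i _ => hintc i)]
      refine Finset.sum_congr rfl fun i _ => ?_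
      rw [integral_map (hemb i).aemeasurable (Continuous.aestronglyMeasurable (by fun_prop))]
      refine integral_congr_ae (ae_of_all _ fun y => ?_)
      show ‖y - xt i‖ ^ 2 = dist (xt i) y ^ 2
      rw [dist_eq_norm, norm_sub_rev]
  -- middle: snapping decreases the cell costs (summed over j, per i)
  have hmid : ∀ i, (∑ j, ∫ y in W j i, ‖y - xt i‖ ^ 2 ∂(μ j))
      ≤ ∑ j, ∫ y in W j i, ‖y - x i‖ ^ 2 ∂(μ j) := by
    intro i
    set ν : Measure (EuclideanSpace ℝ (Fin D)) := ∑ j, (μ j).restrict (W j i) with hν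
    haveI : IsFiniteMeasure ν := by
      constructor
      rw [hν, Measure.coe_finset_sum, Finset.sum_apply]
      refine (ENNReal.sum_lt_top).2 fun j _ => ?_
      rw [Measure.restrict_apply_univ, hWmass j i]
      exact (ENNReal.inv_lt_top).2 (by exact_mod_cast hm)
    have hνsupp : ν Kᶜ = 0 := by
      rw [hν, Measure.coe_finset_sum, Finset.sum_apply]
      exact Finset.sum_eq_zero fun j _ => hsuppR j i
    have hint : ∀ c : EuclideanSpace ℝ (Fin D),
        ∀ j, Integrable (fun y => ‖y - c‖ ^ 2) ((μ j).restrict (W j i)) := fun c j =>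
      (integrable_aux hK (μ j) (hsupp j) (by fun_prop)).restrict
    have h1 : ∀ c : EuclideanSpace ℝ (Fin D),
        (∑ j, ∫ y in W j i, ‖y - c‖ ^ 2 ∂(μ j)) = ∫ y, ‖y - c‖ ^ 2 ∂ν := by
      intro c
      rw [hν, integral_finset_sum_measure (fun j _ => hint c j)]
    rw [h1, h1]
    refine mean_min hK hνsupp _ _ ?_
    -- (ν univ).toReal • xt i = ∫ y ∂ν
    have hMν : (ν Set.univ).toReal = (N : ℝ) * (m : ℝ)⁻¹ := by
      rw [hν, Measure.coe_finset_sum, Finset.sum_apply]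
      have : ∀ j ∈ Finset.univ, ((μ j).restrict (W j i)) Set.univ = (m : ENNReal)⁻¹ :=
        fun j _ => by rw [Measure.restrict_apply_univ, hWmass j i]
      rw [Finset.sum_congr rfl this, Finset.sum_const, Finset.card_univ, Fintype.card_fin,
        nsmul_eq_mul, ENNReal.toReal_mul, ENNReal.toReal_inv]
      simp
    have hidint : ∀ j, Integrable (fun y : EuclideanSpace ℝ (Fin D) => y)
        ((μ j).restrict (W j i)) := fun j =>
      (integrable_aux hK (μ j) (hsupp j) continuous_id).restrict
    have hiν : ∫ y, y ∂ν = ∑ j, ∫ y in W j i, y ∂(μ j) := by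
      rw [hν, integral_finset_sum_measure (fun j _ => hidint j)]
    have hVW : ∀ j', (∫ y in V j' i, y ∂(μ j')) = ∫ y in W j' i, y ∂(μ j') :=
      fun j' => setIntegral_congr_set (hWaeV j' i).symm
    rw [hMν, hiν, hxt]
    simp_rw [hVW]
    rw [← Finset.smul_sum, smul_smul, smul_smul]
    rw [show (N : ℝ) * (m : ℝ)⁻¹ * (N : ℝ)⁻¹ * (m : ℝ) = 1 by field_simp]
    rw [one_smul]
  -- assemble
  refine mul_le_mul_of_nonneg_left ?_ (by positivity)
  calc ∑ j, W2sq (((m : ENNReal))⁻¹ • ∑ i, Measure.dirac (xt i)) (μ j)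
      ≤ ∑ j, ∑ i, ∫ y in W j i, ‖y - xt i‖ ^ 2 ∂(μ j) :=
        Finset.sum_le_sum fun j _ => hup j
    _ = ∑ i, ∑ j, ∫ y in W j i, ‖y - xt i‖ ^ 2 ∂(μ j) := Finset.sum_comm
    _ ≤ ∑ i, ∑ j, ∫ y in W j i, ‖y - x i‖ ^ 2 ∂(μ j) :=
        Finset.sum_le_sum fun i _ => hmid i
    _ = ∑ j, ∑ i, ∫ y in W j i, ‖y - x i‖ ^ 2 ∂(μ j) := Finset.sum_comm
    _ = ∑ j, W2sq (((m : ENNReal))⁻¹ • ∑ i, Measure.dirac (x i)) (μ j) :=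
        Finset.sum_congr rfl fun j _ => (hlow j).symm
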